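/- Let S be a Γ-hemiring with a strong left unity [e,δ] and a right unity. The map μ × σ ↦ μ*′ × σ*′ is an inclusion-preserving bijection between the set of cartesian products of fuzzy h-ideals of S and the set of cartesian products of fuzzy h-ideals of the right operator hemiring R; in particular (μ*′ × σ*′)* = μ × σ and (μ* × σ*)*′ = μ × σ for fuzzy h-ideals μ, σ of S and of R respectively. -/
import Mathlib


open scoped Classical

/-- A `Γ`-hemiring structure on additive commutative monoids `S` and `Γ`. -/
structure GammaHemiring (S : Type) (Γ : Type) [AddCommMonoid S] [AddCommMonoid Γ] : Type where
  tri : S → Γ → S → S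
  add_left : ∀ a b α c, tri (a + b) α c = tri a α c + tri b α c
  add_mid : ∀ a α β b, tri a (α + β) b = tri a α b + tri a β b
  add_right : ∀ a α b c, tri a α (b + c) = tri a α b + tri a α c
  tri_assoc : ∀ a α b β c, tri a α (tri b β c) = tri (tri a α b) β c
  zero_left : ∀ α a, tri 0 α a = 0
  zero_right : ∀ a α, tri a α 0 = 0
  zero_mid : ∀ a b, tri a 0 b = 0

namespace GammaHemiring

variable {S Γ : Type} [AddCommMonoid S] [AddCommMonoid Γ] (H : GammaHemiring S Γ)

/-- Action of a formal sum `Σ (xᵢ, αᵢ)` on an element of `S`. -/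
def lAct (u : Multiset (S × Γ)) (a : S) : S := (u.map fun p => H.tri p.1 p.2 a).sum

/-- The congruence `ρ` on the free additive commutative semigroup on `S × Γ`. -/
def lSetoid : Setoid (Multiset (S × Γ)) where
  r u v := ∀ a, H.lAct u a = H.lAct v a
  iseqv := ⟨fun _ _ => rfl, fun h a => (h a).symm, fun h1 h2 a => (h1 a).trans (h2 a)⟩

/-- The left operator hemiring `L` of a `Γ`-hemiring `S`. -/
def LOp := Quotient H.lSetoid

/-- Multiplication of formal sums: `(Σ[xᵢ,αᵢ])(Σ[yⱼ,βⱼ]) = Σ[xᵢαᵢyⱼ, βⱼ]`. -/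
def lMul (u v : Multiset (S × Γ)) : Multiset (S × Γ) :=
  u.bind fun p => v.map fun q => (H.tri p.1 p.2 q.1, q.2)

lemma lAct_add (u v : Multiset (S × Γ)) (a : S) :
    H.lAct (u + v) a = H.lAct u a + H.lAct v a := by
  simp [lAct]

lemma tri_sum (x : S) (α : Γ) (m : Multiset S) :
    H.tri x α m.sum = (m.map (H.tri x α)).sum := by
  induction m using Multiset.induction_on with
  | empty => simp [H.zero_right]
  | cons b m ih => simp [H.add_right, ih]

lemma lAct_arg_add (u : Multiset (S × Γ)) (b c : S) :
    H.lAct u (b + c) = H.lAct u b + H.lAct u c := by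
  simp only [lAct, H.add_right]
  rw [← Multiset.sum_map_add]

lemma lAct_arg_zero (u : Multiset (S × Γ)) : H.lAct u 0 = 0 := by
  simp [lAct, H.zero_right]

lemma lAct_zero (a : S) : H.lAct 0 a = 0 := by simp [lAct]

lemma lAct_mul (u v : Multiset (S × Γ)) (a : S) :
    H.lAct (H.lMul u v) a = H.lAct u (H.lAct v a) := by
  unfold lAct lMul
  rw [Multiset.map_bind, Multiset.sum_bind]
  congr 1
  refine Multiset.map_congr rfl ?_
  intro p _
  rw [tri_sum, Multiset.map_map, Multiset.map_map]
  congr 1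
  refine Multiset.map_congr rfl ?_
  intro q _
  simp [Function.comp, H.tri_assoc]

noncomputable instance : Add H.LOp :=
  ⟨Quotient.map₂ (· + ·) (fun {u u'} hu {v v'} hv a => by
    rw [lAct_add, lAct_add, hu a, hv a])⟩

noncomputable instance : Zero H.LOp := ⟨Quotient.mk H.lSetoid 0⟩

noncomputable instance : Mul H.LOp :=
  ⟨Quotient.map₂ H.lMul (fun {u u'} hu {v v'} hv a => by
    rw [lAct_mul, lAct_mul, hv a, hu (H.lAct v' a)])⟩

/-- The left operator hemiring structure. -/
noncomputable instance : NonUnitalSemiring H.LOp where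
  add := (· + ·)
  zero := 0
  mul := (· * ·)
  nsmul := nsmulRec
  nsmul_zero := fun _ => rfl
  nsmul_succ := fun _ _ => rfl
  add_assoc a b c := Quotient.inductionOn₃ a b c fun u v w =>
    congrArg (Quotient.mk _) (add_assoc u v w)
  zero_add a := Quotient.inductionOn a fun u => congrArg (Quotient.mk _) (zero_add u)
  add_zero a := Quotient.inductionOn a fun u => congrArg (Quotient.mk _) (add_zero u)
  add_comm a b := Quotient.inductionOn₂ a b fun u v => congrArg (Quotient.mk _) (add_comm u v)
  left_distrib a b c := Quotient.inductionOn₃ a b c fun u v w => Quotient.sound fun s => by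
    simp [lAct_mul, lAct_add, lAct_arg_add]
  right_distrib a b c := Quotient.inductionOn₃ a b c fun u v w => Quotient.sound fun s => by
    simp [lAct_mul, lAct_add]
  zero_mul a := Quotient.inductionOn a fun u => Quotient.sound fun s => by
    simp [lAct_mul, lAct_zero]
  mul_zero a := Quotient.inductionOn a fun u => Quotient.sound fun s => by
    simp [lAct_mul, lAct_zero, lAct_arg_zero]
  mul_assoc a b c := Quotient.inductionOn₃ a b c fun u v w => Quotient.sound fun s => by
    simp [lAct_mul]

/-- The class of a formal sum in `L`. -/
def lMk (u : Multiset (S × Γ)) : H.LOp := Quotient.mk H.lSetoid u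

lemma mk_add (u v : Multiset (S × Γ)) : H.lMk u + H.lMk v = H.lMk (u + v) := rfl

lemma mk_mul (u v : Multiset (S × Γ)) : H.lMk u * H.lMk v = H.lMk (H.lMul u v) := rfl

/-- Action of an element of `L` on `S`. -/
def lActQ : H.LOp → S → S := Quotient.lift H.lAct (fun _ _ h => funext h)

end GammaHemiring
instance : Fact ((0:ℝ) ≤ 1) := ⟨zero_le_one⟩

/-- Characteristic function of a subset, valued in the unit interval. -/
noncomputable def fuzzyChar {X : Type} (A : Set X) (x : X) : unitInterval :=
  if x ∈ A then 1 else 0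

/-- A fuzzy h-ideal of a hemiring. -/
def IsFuzzyHIdeal {T : Type} [NonUnitalSemiring T] (μ : T → unitInterval) : Prop :=
  (∀ x y, μ x ⊓ μ y ≤ μ (x + y)) ∧
  (∀ x y, μ x ⊔ μ y ≤ μ (x * y)) ∧
  (∀ x a b z, x + a + z = b + z → μ a ⊓ μ b ≤ μ x)

namespace GammaHemiring

variable {S Γ : Type} [AddCommMonoid S] [AddCommMonoid Γ] (H : GammaHemiring S Γ)

/-- A fuzzy h-ideal of a `Γ`-hemiring. -/
def IsGFuzzyHIdeal (μ : S → unitInterval) : Prop :=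
  (∀ x y, μ x ⊓ μ y ≤ μ (x + y)) ∧
  (∀ x γ y, μ x ⊔ μ y ≤ μ (H.tri x γ y)) ∧
  (∀ x a b z, x + a + z = b + z → μ a ⊓ μ b ≤ μ x)

/-- For a fuzzy subset `μ` of `L`, the fuzzy subset `μ⁺` of `S`, `μ⁺(x) = inf_γ μ([x,γ])`. -/
noncomputable def plusMap (μ : H.LOp → unitInterval) (x : S) : unitInterval :=
  ⨅ γ : Γ, μ (H.lMk {(x, γ)})

/-- For a fuzzy subset `σ` of `S`, the fuzzy subset `σ⁺′` of `L`,
`σ⁺′(Σᵢ[xᵢ,αᵢ]) = inf_s σ(Σᵢ xᵢαᵢs)`. -/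
noncomputable def plusPrime (σ : S → unitInterval) : H.LOp → unitInterval :=
  Quotient.lift (fun u => ⨅ s : S, σ (H.lAct u s))
    (fun u v h => iInf_congr fun s => by rw [h s])

/-- A left unity of `S`: an element `Σᵢ[eᵢ,δᵢ]` of `L` acting as the identity. -/
def IsLeftUnity (E : Multiset (S × Γ)) : Prop := ∀ a : S, H.lAct E a = a

/-- A right unity of `S`: a formal sum `Σⱼ[γⱼ,fⱼ]` with `Σⱼ a γⱼ fⱼ = a` for all `a`. -/
def IsRightUnity (E : Multiset (Γ × S)) : Prop :=
  ∀ a : S, ((E.map fun p => H.tri a p.1 p.2).sum) = a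

end GammaHemiring
namespace GammaHemiring

variable {S Γ : Type} [AddCommMonoid S] [AddCommMonoid Γ] (H : GammaHemiring S Γ)

/-- Right action of a formal sum `Σ (γᵢ, xᵢ)` on an element of `S`. -/
def rAct (u : Multiset (Γ × S)) (a : S) : S := (u.map fun p => H.tri a p.1 p.2).sum

/-- The defining congruence of the right operator hemiring. -/
def rSetoid : Setoid (Multiset (Γ × S)) where
  r u v := ∀ a, H.rAct u a = H.rAct v a
  iseqv := ⟨fun _ _ => rfl, fun h a => (h a).symm, fun h1 h2 a => (h1 a).trans (h2 a)⟩

/-- The right operator hemiring `R` of a `Γ`-hemiring `S`. -/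
def ROp := Quotient H.rSetoid

/-- Multiplication of formal sums: `(Σ[αᵢ,xᵢ])(Σ[βⱼ,yⱼ]) = Σ[αᵢ, xᵢβⱼyⱼ]`. -/
def rMul (u v : Multiset (Γ × S)) : Multiset (Γ × S) :=
  u.bind fun p => v.map fun q => (p.1, H.tri p.2 q.1 q.2)

lemma rAct_add (u v : Multiset (Γ × S)) (a : S) :
    H.rAct (u + v) a = H.rAct u a + H.rAct v a := by
  simp [rAct]

lemma rAct_zero (a : S) : H.rAct 0 a = 0 := by simp [rAct]

lemma rAct_arg_add (u : Multiset (Γ × S)) (b c : S) :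
    H.rAct u (b + c) = H.rAct u b + H.rAct u c := by
  simp only [rAct, H.add_left]
  rw [← Multiset.sum_map_add]

lemma rAct_arg_zero (u : Multiset (Γ × S)) : H.rAct u 0 = 0 := by
  simp [rAct, H.zero_left]

lemma sum_tri (m : Multiset S) (α : Γ) (x : S) :
    H.tri m.sum α x = (m.map fun b => H.tri b α x).sum := by
  induction m using Multiset.induction_on with
  | empty => simp [H.zero_left]
  | cons b m ih => simp [H.add_left, ih]

lemma multiset_sum_swap {α β M : Type} [AddCommMonoid M] (m : Multiset α) (n : Multiset β)
    (f : α → β → M) :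
    (m.map fun a => (n.map fun b => f a b).sum).sum
      = (n.map fun b => (m.map fun a => f a b).sum).sum := by
  induction m using Multiset.induction_on with
  | empty => simp
  | cons a m ih => simp [ih, Multiset.sum_map_add]

lemma rAct_mul (u v : Multiset (Γ × S)) (a : S) :
    H.rAct (H.rMul u v) a = H.rAct v (H.rAct u a) := by
  unfold rAct rMul
  rw [Multiset.map_bind, Multiset.sum_bind]
  simp only [Multiset.map_map, Function.comp]
  rw [multiset_sum_swap]
  refine congrArg _ (Multiset.map_congr rfl ?_)
  intro q _
  rw [sum_tri, Multiset.map_map]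
  refine congrArg _ (Multiset.map_congr rfl ?_)
  intro p _
  simp [Function.comp, H.tri_assoc]

noncomputable instance : Add H.ROp :=
  ⟨Quotient.map₂ (· + ·) (fun {u u'} hu {v v'} hv a => by
    rw [rAct_add, rAct_add, hu a, hv a])⟩

noncomputable instance : Zero H.ROp := ⟨Quotient.mk H.rSetoid 0⟩

noncomputable instance : Mul H.ROp :=
  ⟨Quotient.map₂ H.rMul (fun {u u'} hu {v v'} hv a => by
    rw [rAct_mul, rAct_mul, hu a, hv (H.rAct u' a)])⟩

/-- The right operator hemiring structure. -/
noncomputable instance : NonUnitalSemiring H.ROp where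
  add := (· + ·)
  zero := 0
  mul := (· * ·)
  nsmul := nsmulRec
  nsmul_zero := fun _ => rfl
  nsmul_succ := fun _ _ => rfl
  add_assoc a b c := Quotient.inductionOn₃ a b c fun u v w =>
    congrArg (Quotient.mk _) (add_assoc u v w)
  zero_add a := Quotient.inductionOn a fun u => congrArg (Quotient.mk _) (zero_add u)
  add_zero a := Quotient.inductionOn a fun u => congrArg (Quotient.mk _) (add_zero u)
  add_comm a b := Quotient.inductionOn₂ a b fun u v => congrArg (Quotient.mk _) (add_comm u v)
  left_distrib a b c := Quotient.inductionOn₃ a b c fun u v w => Quotient.sound fun s => by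
    simp [rAct_mul, rAct_add]
  right_distrib a b c := Quotient.inductionOn₃ a b c fun u v w => Quotient.sound fun s => by
    simp [rAct_mul, rAct_add, rAct_arg_add]
  zero_mul a := Quotient.inductionOn a fun u => Quotient.sound fun s => by
    simp [rAct_mul, rAct_zero, rAct_arg_zero]
  mul_zero a := Quotient.inductionOn a fun u => Quotient.sound fun s => by
    simp [rAct_mul, rAct_zero]
  mul_assoc a b c := Quotient.inductionOn₃ a b c fun u v w => Quotient.sound fun s => by
    simp [rAct_mul]

/-- The class of a formal sum in `R`. -/
def rMk (u : Multiset (Γ × S)) : H.ROp := Quotient.mk H.rSetoid u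

/-- Action of an element of `R` on `S`. -/
def rActQ : H.ROp → S → S := Quotient.lift H.rAct (fun _ _ h => funext h)

/-- For a fuzzy subset `δ` of `R`, the fuzzy subset `δ*` of `S`, `δ*(x) = inf_γ δ([γ,x])`. -/
noncomputable def starMap (μ : H.ROp → unitInterval) (x : S) : unitInterval :=
  ⨅ γ : Γ, μ (H.rMk {(γ, x)})

/-- For a fuzzy subset `η` of `S`, the fuzzy subset `η*′` of `R`,
`η*′(Σᵢ[αᵢ,xᵢ]) = inf_s η(Σᵢ sαᵢxᵢ)`. -/
noncomputable def starPrime (η : S → unitInterval) : H.ROp → unitInterval :=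
  Quotient.lift (fun u => ⨅ s : S, η (H.rAct u s))
    (fun u v h => iInf_congr fun s => by rw [h s])

lemma rAct_singleton (γ : Γ) (x : S) (a : S) : H.rAct {(γ, x)} a = H.tri a γ x := by
  simp [rAct]

lemma rAct_arg_sum (u : Multiset (Γ × S)) (m : Multiset S) :
    H.rAct u m.sum = (m.map (H.rAct u)).sum := by
  induction m using Multiset.induction_on with
  | empty => simp [H.rAct_arg_zero]
  | cons b m ih => simp [H.rAct_arg_add, ih]

lemma tri_rAct (a : S) (γ : Γ) (u : Multiset (Γ × S)) (s : S) :
    H.tri a γ (H.rAct u s) = H.rAct u (H.tri a γ s) := by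
  unfold rAct
  rw [tri_sum, Multiset.map_map]
  refine congrArg _ (Multiset.map_congr rfl ?_)
  intro p _
  simp [Function.comp, H.tri_assoc]

lemma rMk_add (u v : Multiset (Γ × S)) : H.rMk u + H.rMk v = H.rMk (u + v) := rfl

lemma rMk_mul (u v : Multiset (Γ × S)) : H.rMk u * H.rMk v = H.rMk (H.rMul u v) := rfl

lemma rMk_single_rAct (γ : Γ) (u : Multiset (Γ × S)) (s : S) :
    H.rMk {(γ, H.rAct u s)} = H.rMk {(γ, s)} * H.rMk u := by
  rw [rMk_mul]
  refine Quotient.sound fun a => ?_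
  rw [H.rAct_mul, rAct_singleton, rAct_singleton, tri_rAct]

lemma starD_le (μ : H.ROp → unitInterval) (hμ : IsFuzzyHIdeal μ)
    (u : Multiset (Γ × S)) (γ : Γ) (s : S) :
    μ (H.rMk u) ≤ μ (H.rMk {(γ, H.rAct u s)}) := by
  rw [rMk_single_rAct]
  exact le_trans le_sup_right (hμ.2.1 _ _)

lemma inf_le_mapped (μ : H.ROp → unitInterval) (hμ : IsFuzzyHIdeal μ)
    (δ : Γ) (u v : Multiset (Γ × S)) :
    (⨅ s : S, ⨅ γ : Γ, μ (H.rMk {(γ, H.rAct u s)})) ≤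
      μ (H.rMk (v.map fun p => (p.1, H.rAct u p.2))) := by
  induction v using Multiset.induction_on with
  | empty =>
    have h0 : H.rMk {(δ, H.rAct u 0)} = H.rMk (0 : Multiset (Γ × S)) :=
      Quotient.sound fun a => by
        rw [rAct_singleton, H.rAct_arg_zero, H.zero_right, H.rAct_zero]
    rw [Multiset.map_zero, ← h0]
    exact le_trans (iInf_le _ 0) (iInf_le _ δ)
  | cons p w ih =>
    have h1 : H.rMk ((p ::ₘ w).map fun q => (q.1, H.rAct u q.2))
        = H.rMk {(p.1, H.rAct u p.2)} + H.rMk (w.map fun q => (q.1, H.rAct u q.2)) := by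
      rw [rMk_add, Multiset.map_cons, Multiset.singleton_add]
    rw [h1]
    refine le_trans (le_inf ?_ ih) (hμ.1 _ _)
    exact le_trans (iInf_le _ p.2) (iInf_le _ p.1)

lemma rMk_eq_unity (E' : Multiset (Γ × S)) (hE' : H.IsRightUnity E')
    (u : Multiset (Γ × S)) :
    H.rMk (E'.map fun p => (p.1, H.rAct u p.2)) = H.rMk u := by
  refine Quotient.sound fun a => ?_
  show ((E'.map fun p => (p.1, H.rAct u p.2)).map fun q => H.tri a q.1 q.2).sum = H.rAct u a
  rw [Multiset.map_map]
  have h1 : (E'.map ((fun q : Γ × S => H.tri a q.1 q.2) ∘ fun p => (p.1, H.rAct u p.2)))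
      = E'.map ((H.rAct u) ∘ fun p => H.tri a p.1 p.2) := by
    refine Multiset.map_congr rfl fun p _ => ?_
    simp only [Function.comp]
    exact H.tri_rAct a p.1 u p.2
  rw [h1, ← Multiset.map_map, ← H.rAct_arg_sum]
  exact congrArg _ (hE' a)

lemma starPrime_starMap_eq (μ : H.ROp → unitInterval) (hμ : IsFuzzyHIdeal μ)
    (δ : Γ) (E' : Multiset (Γ × S)) (hE' : H.IsRightUnity E') (u : Multiset (Γ × S)) :
    (⨅ s : S, ⨅ γ : Γ, μ (H.rMk {(γ, H.rAct u s)})) = μ (H.rMk u) := by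
  refine le_antisymm ?_ (le_iInf fun s => le_iInf fun γ => H.starD_le μ hμ u γ s)
  calc (⨅ s : S, ⨅ γ : Γ, μ (H.rMk {(γ, H.rAct u s)}))
      ≤ μ (H.rMk (E'.map fun p => (p.1, H.rAct u p.2))) := H.inf_le_mapped μ hμ δ u E'
    _ = μ (H.rMk u) := by rw [H.rMk_eq_unity E' hE' u]

end GammaHemiring
/-- for `S` with a strong left unity `[e,δ]` and a right unity, the map
`μ × σ ↦ μ*′ × σ*′` is an inclusion-preserving bijection between cartesian products of
fuzzy h-ideals of `S` and of `R`: `(μ*′ × σ*′)* = μ × σ`, `(μ* × σ*)*′ = μ × σ`, and the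
map is inclusion preserving. -/
theorem starPrime_prod_bijection {S Γ : Type} [AddCommMonoid S] [AddCommMonoid Γ]
    (H : GammaHemiring S Γ)
    (e : S) (δ : Γ) (he : ∀ a : S, H.tri e δ a = a)
    (E' : Multiset (Γ × S)) (hE' : H.IsRightUnity E') :
    (∀ μ σ : S → unitInterval, H.IsGFuzzyHIdeal μ → H.IsGFuzzyHIdeal σ →
      (fun p : S × S => ⨅ q : Γ × Γ,
          (H.starPrime μ (H.rMk {(q.1, p.1)}) ⊓ H.starPrime σ (H.rMk {(q.2, p.2)})))
        = fun p : S × S => μ p.1 ⊓ σ p.2) ∧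
    (∀ μ σ : H.ROp → unitInterval, IsFuzzyHIdeal μ → IsFuzzyHIdeal σ →
      (fun l : H.ROp × H.ROp =>
          ⨅ q : S × S, (H.starMap μ (H.rActQ l.1 q.1) ⊓ H.starMap σ (H.rActQ l.2 q.2)))
        = fun l : H.ROp × H.ROp => μ l.1 ⊓ σ l.2) ∧
    (∀ μ₁ σ₁ μ₂ σ₂ : S → unitInterval,
      H.IsGFuzzyHIdeal μ₁ → H.IsGFuzzyHIdeal σ₁ →
      H.IsGFuzzyHIdeal μ₂ → H.IsGFuzzyHIdeal σ₂ →
      ((fun p : S × S => μ₁ p.1 ⊓ σ₁ p.2) ≤ fun p : S × S => μ₂ p.1 ⊓ σ₂ p.2) →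
      ((fun l : H.ROp × H.ROp => H.starPrime μ₁ l.1 ⊓ H.starPrime σ₁ l.2)
        ≤ fun l : H.ROp × H.ROp => H.starPrime μ₂ l.1 ⊓ H.starPrime σ₂ l.2)) := by
  have hsp : ∀ (η : S → unitInterval) (γ : Γ) (x : S),
      H.starPrime η (H.rMk {(γ, x)}) = ⨅ s : S, η (H.tri s γ x) := fun η γ x =>
    iInf_congr fun s => by rw [H.rAct_singleton]
  refine ⟨?_, ?_, ?_⟩
  · intro μ σ hμ hσ
    funext p
    simp only [hsp]
    refine le_antisymm ?_ (le_iInf fun q => inf_le_inf ?_ ?_)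
    · refine le_trans (iInf_le _ (δ, δ)) (inf_le_inf ?_ ?_)
      · exact le_trans (iInf_le _ e) (le_of_eq (congrArg μ (he p.1)))
      · exact le_trans (iInf_le _ e) (le_of_eq (congrArg σ (he p.2)))
    · exact le_iInf fun s => le_trans le_sup_right (hμ.2.1 s q.1 p.1)
    · exact le_iInf fun s => le_trans le_sup_right (hσ.2.1 s q.2 p.2)
  · intro μ σ hμ hσ
    funext l
    obtain ⟨A, B⟩ := l
    refine Quotient.inductionOn₂ A B fun u v => ?_
    show (⨅ q : S × S, (⨅ γ : Γ, μ (H.rMk {(γ, H.rAct u q.1)}))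
        ⊓ (⨅ γ : Γ, σ (H.rMk {(γ, H.rAct v q.2)}))) = μ (H.rMk u) ⊓ σ (H.rMk v)
    refine le_antisymm (le_inf ?_ ?_) (le_iInf fun q => inf_le_inf
      (le_iInf fun γ => H.starD_le μ hμ u γ q.1) (le_iInf fun γ => H.starD_le σ hσ v γ q.2))
    · rw [← H.starPrime_starMap_eq μ hμ δ E' hE' u]
      exact le_iInf fun s => le_trans (iInf_le _ (s, s)) inf_le_left
    · rw [← H.starPrime_starMap_eq σ hσ δ E' hE' v]
      exact le_iInf fun s => le_trans (iInf_le _ (s, s)) inf_le_right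
  · intro μ₁ σ₁ μ₂ σ₂ _ _ _ _ hle l
    obtain ⟨A, B⟩ := l
    refine Quotient.inductionOn₂ A B fun u v => ?_
    show (⨅ s : S, μ₁ (H.rAct u s)) ⊓ (⨅ s : S, σ₁ (H.rAct v s))
        ≤ (⨅ s : S, μ₂ (H.rAct u s)) ⊓ (⨅ s : S, σ₂ (H.rAct v s))
    refine le_inf (le_iInf fun s => ?_) (le_iInf fun t => ?_)
    · exact le_trans (inf_le_inf (iInf_le _ s) (iInf_le _ s))
        (le_trans (hle (H.rAct u s, H.rAct v s)) inf_le_left)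
    · exact le_trans (inf_le_inf (iInf_le _ t) (iInf_le _ t))
        (le_trans (hle (H.rAct u t, H.rAct v t)) inf_le_right)
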